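/- arXiv:2501.00543 — 6 statements merged into one kernel-verified Lean document; each statement's English description precedes it below -/
import Mathlib

section
/- Suppose F₁,…,Fₙ, G₁,…,Gₙ, H₁,…,Hₙ, K₁,…,Kₙ are functions on the unit disk satisfying ∑ⱼ Fⱼ Hⱼ − ∑ⱼ Gⱼ K̂ⱼ = 1 and ∑ⱼ Fⱼ Kⱼ + ∑ⱼ Gⱼ Ĥⱼ = 0 pointwise. Then the auxiliary Bezout equation holds pointwise: ∑ₛ ∑ᵣ (F̂ᵣFₛ + ĜₛGᵣ)(ĤᵣHₛ + K̂ᵣKₛ) + ∑_{s<r} (ĜₛFᵣ − ĜᵣFₛ)(KᵣHₛ − KₛHᵣ) + ∑_{s<r} (F̂ᵣGₛ − F̂ₛGᵣ)(ĤₛK̂ᵣ − ĤᵣK̂ₛ) = 1. -/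
open Metric Finset

/-- The hat involution: `hat P z = conj (P (conj z))`. -/
noncomputable def hat (P : ℂ → ℂ) : ℂ → ℂ := fun z => starRingEnd ℂ (P (starRingEnd ℂ z))

lemma two_mul_sum_lt {n : ℕ} (f : Fin n → Fin n → ℂ)
    (hsym : ∀ s r, f s r = f r s) (hdiag : ∀ s, f s s = 0) :
    2 * ∑ s, ∑ r ∈ univ.filter (fun r => s < r), f s r = ∑ s, ∑ r, f s r := by
  simp_rw [Finset.sum_filter]
  have swap : (∑ s, ∑ r, if s < r then f s r else 0)
      = ∑ s, ∑ r, if r < s then f s r else 0 := by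
    rw [Finset.sum_comm]
    refine Finset.sum_congr rfl fun s _ => Finset.sum_congr rfl fun r _ => ?_
    by_cases h : r < s <;> simp [h, hsym]
  rw [two_mul]
  nth_rewrite 2 [swap]
  rw [← Finset.sum_add_distrib]
  refine Finset.sum_congr rfl fun s _ => ?_
  rw [← Finset.sum_add_distrib]
  refine Finset.sum_congr rfl fun r _ => ?_
  rcases lt_trichotomy s r with h | h | h
  · simp [h, not_lt_of_gt h]
  · subst h; simp [hdiag]
  · simp [h, not_lt_of_gt h]

lemma key_algebra (n : ℕ) (a b c d A B C D : Fin n → ℂ)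
    (e1 : (∑ j, a j * c j) - ∑ j, b j * D j = 1)
    (e2 : (∑ j, a j * d j) + ∑ j, b j * C j = 0)
    (e1' : (∑ j, A j * C j) - ∑ j, B j * d j = 1)
    (e2' : (∑ j, A j * D j) + ∑ j, B j * c j = 0) :
    (∑ s, ∑ r, (A r * a s + B s * b r) * (C r * c s + D r * d s))
    + (∑ s, ∑ r ∈ univ.filter (fun r => s < r),
        (B s * a r - B r * a s) * (d r * c s - d s * c r))
    + (∑ s, ∑ r ∈ univ.filter (fun r => s < r),
        (A r * b s - A s * b r) * (C s * D r - C r * D s)) = 1 := by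
  have hL1 : (∑ s, ∑ r, (A r * a s + B s * b r) * (C r * c s + D r * d s))
      = (∑ j, a j * c j) * (∑ j, A j * C j) + (∑ j, a j * d j) * (∑ j, A j * D j)
        + (∑ j, B j * c j) * (∑ j, b j * C j) + (∑ j, B j * d j) * (∑ j, b j * D j) := by
    have h : ∀ s r : Fin n, (A r * a s + B s * b r) * (C r * c s + D r * d s)
        = (a s * c s) * (A r * C r) + (a s * d s) * (A r * D r)
          + (B s * c s) * (b r * C r) + (B s * d s) * (b r * D r) := by
      intros; ring
    simp_rw [h, Finset.sum_add_distrib, ← Finset.sum_mul_sum]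
  have hg2 : (∑ s, ∑ r : Fin n, (B s * a r - B r * a s) * (d r * c s - d s * c r))
      = 2 * ((∑ j, B j * c j) * (∑ j, a j * d j) - (∑ j, B j * d j) * (∑ j, a j * c j)) := by
    have h : ∀ s r : Fin n, (B s * a r - B r * a s) * (d r * c s - d s * c r)
        = (B s * c s) * (a r * d r) - (B s * d s) * (a r * c r)
          - (a s * c s) * (B r * d r) + (a s * d s) * (B r * c r) := by
      intros; ring
    simp_rw [h, Finset.sum_add_distrib, Finset.sum_sub_distrib, ← Finset.sum_mul_sum]
    ring
  have hg3 : (∑ s, ∑ r : Fin n, (A r * b s - A s * b r) * (C s * D r - C r * D s))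
      = 2 * ((∑ j, A j * D j) * (∑ j, b j * C j) - (∑ j, A j * C j) * (∑ j, b j * D j)) := by
    have h : ∀ s r : Fin n, (A r * b s - A s * b r) * (C s * D r - C r * D s)
        = (b s * C s) * (A r * D r) - (b s * D s) * (A r * C r)
          - (A s * C s) * (b r * D r) + (A s * D s) * (b r * C r) := by
      intros; ring
    simp_rw [h, Finset.sum_add_distrib, Finset.sum_sub_distrib, ← Finset.sum_mul_sum]
    ring
  have hd2 := two_mul_sum_lt (fun s r => (B s * a r - B r * a s) * (d r * c s - d s * c r))
    (fun s r => by ring) (fun s => by ring)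
  have hd3 := two_mul_sum_lt (fun s r => (A r * b s - A s * b r) * (C s * D r - C r * D s))
    (fun s r => by ring) (fun s => by ring)
  have hL2 : (∑ s, ∑ r ∈ univ.filter (fun r => s < r),
      (B s * a r - B r * a s) * (d r * c s - d s * c r))
      = (∑ j, B j * c j) * (∑ j, a j * d j) - (∑ j, B j * d j) * (∑ j, a j * c j) := by
    apply mul_left_cancel₀ (two_ne_zero (α := ℂ))
    rw [hd2, hg2]
  have hL3 : (∑ s, ∑ r ∈ univ.filter (fun r => s < r),
      (A r * b s - A s * b r) * (C s * D r - C r * D s))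
      = (∑ j, A j * D j) * (∑ j, b j * C j) - (∑ j, A j * C j) * (∑ j, b j * D j) := by
    apply mul_left_cancel₀ (two_ne_zero (α := ℂ))
    rw [hd3, hg3]
  rw [hL1, hL2, hL3]
  linear_combination ((∑ j, A j * C j) - (∑ j, B j * d j)) * e1 + e1'
    + ((∑ j, A j * D j) + (∑ j, B j * c j)) * e2

theorem auxiliary_Bezout (n : ℕ) (F G H K : Fin n → ℂ → ℂ)
    (h1 : ∀ z ∈ ball (0 : ℂ) 1,
      (∑ j, F j z * H j z) - ∑ j, G j z * hat (K j) z = 1)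
    (h2 : ∀ z ∈ ball (0 : ℂ) 1,
      (∑ j, F j z * K j z) + ∑ j, G j z * hat (H j) z = 0) :
    ∀ z ∈ ball (0 : ℂ) 1,
      (∑ s, ∑ r, (hat (F r) z * F s z + hat (G s) z * G r z)
          * (hat (H r) z * H s z + hat (K r) z * K s z))
      + (∑ s, ∑ r ∈ univ.filter (fun r => s < r),
          (hat (G s) z * F r z - hat (G r) z * F s z)
          * (K r z * H s z - K s z * H r z))
      + (∑ s, ∑ r ∈ univ.filter (fun r => s < r),
          (hat (F r) z * G s z - hat (F s) z * G r z)
          * (hat (H s) z * hat (K r) z - hat (H r) z * hat (K s) z)) = 1 := by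
  intro z hz
  have hz' : (starRingEnd ℂ) z ∈ ball (0 : ℂ) 1 := by
    rw [mem_ball_zero_iff] at hz ⊢
    simpa using hz
  have e1 := h1 z hz
  have e2 := h2 z hz
  have e1' : (∑ j, hat (F j) z * hat (H j) z) - ∑ j, hat (G j) z * K j z = 1 := by
    have h := congrArg (starRingEnd ℂ) (h1 _ hz')
    simpa [hat, map_sub, map_sum, map_mul, Complex.conj_conj] using h
  have e2' : (∑ j, hat (F j) z * hat (K j) z) + ∑ j, hat (G j) z * H j z = 0 := by
    have h := congrArg (starRingEnd ℂ) (h2 _ hz')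
    simpa [hat, map_add, map_sum, map_mul, Complex.conj_conj] using h
  exact key_algebra n (fun j => F j z) (fun j => G j z) (fun j => H j z) (fun j => K j z)
    (fun j => hat (F j) z) (fun j => hat (G j) z) (fun j => hat (H j) z) (fun j => hat (K j) z)
    e1 e2 e1' e2'
end

section
/- Suppose F₁,…,Fₙ, G₁,…,Gₙ, H₁,…,Hₙ, K₁,…,Kₙ ∈ H^∞(D) satisfy ∑ⱼ FⱼHⱼ − ∑ⱼ GⱼK̂ⱼ = 1 and ∑ⱼ FⱼKⱼ + ∑ⱼ GⱼĤⱼ = 0 on D, and max_j {‖Hⱼ‖_∞, ‖Kⱼ‖_∞} ≤ M. Then for all z ∈ D, Δ(z) := ∑_{r,s} |Fₛ(z)F̂ᵣ(z) + Gᵣ(z)Ĝₛ(z)|² + ∑_{s<r} |Ĝₛ(z)Fᵣ(z) − Ĝᵣ(z)Fₛ(z)|² + ∑_{s<r} |F̂ᵣ(z)Gₛ(z) − F̂ₛ(z)Gᵣ(z)|² ≥ 1/(C n² M⁴) for an absolute constant C (e.g. C = 36 works, more precisely Δ(z) · (3·(2M²)²·n²) ≥ 1 suffices). -/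
open Metric Finset

/-!
At a point `z`, put `aⱼ = FⱼHⱼ - GⱼK̂ⱼ`, `bⱼ = FⱼKⱼ + GⱼĤⱼ`, `a'ⱼ = F̂ⱼĤⱼ - ĜⱼKⱼ` and
`b'ⱼ = F̂ⱼK̂ⱼ + ĜⱼHⱼ`. The Bezout equations at `z` give `∑ a = 1` and `∑ b = 0`; conjugating the
first one at `conj z` gives `∑ a' = 1`. Hence `∑_{r,s} (a_s a'_r + b_s b'_r) = 1`, and pairing the
`(s, r)` and `(r, s)` terms regroups this double sum as the auxiliary identity: a sum of the
quantities whose squared moduli make up `Δ(z)`, each times a factor of modulus at most `2M²`.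
Cauchy–Schwarz over at most `n²` pairs in each of the three sums, together with
`(x + y + w)² ≤ 3 (x² + y² + w²)`, turns this into `1 ≤ 3 (2M²)² n² Δ(z)`.
-/

namespace Finset

variable {ι M : Type*} [Fintype ι] [LinearOrder ι] [AddCommMonoid M]

theorem sum_sum_eq_sum_diag_add_sum_filter_lt (x : ι → ι → M) :
    ∑ i, ∑ j, x i j = ∑ i, x i i + ∑ i, ∑ j ∈ univ.filter (i < ·), (x i j + x j i) := by
  have hsplit : ∀ i j, x i j = (if i < j then x i j else 0) + (if i = j then x i j else 0)
      + (if j < i then x i j else 0) := by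
    intro i j
    rcases lt_trichotomy i j with h | rfl | h
    · simp [h, h.ne, h.not_gt]
    · simp
    · simp [h, h.ne', h.not_gt]
  have hswap : ∑ i, ∑ j ∈ univ.filter (i < ·), x j i = ∑ i, ∑ j ∈ univ.filter (· < i), x i j :=
    sum_comm' (by simp)
  conv_lhs => enter [2, i, 2, j]; rw [hsplit i j]
  simp only [sum_add_distrib, sum_ite_eq, mem_univ, if_true, ← sum_filter, hswap]
  abel

theorem sum_sum_add_sum_filter_lt_eq_sum_sum (x y u v : ι → ι → M)
    (hdiag : ∀ i, x i i = y i i) (hoff : ∀ i j, x i j + x j i + u i j + v i j = y i j + y j i) :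
    ∑ i, ∑ j, x i j + ∑ i, ∑ j ∈ univ.filter (i < ·), u i j
      + ∑ i, ∑ j ∈ univ.filter (i < ·), v i j = ∑ i, ∑ j, y i j := by
  simp only [sum_sum_eq_sum_diag_add_sum_filter_lt, hdiag, ← hoff, sum_add_distrib]
  abel

end Finset

theorem bezout_pair_identity {ι R : Type*} [Fintype ι] [LinearOrder ι] [CommRing R]
    (f g h k f' g' h' k' : ι → R)
    (e₁ : ∑ j, f j * h j - ∑ j, g j * k' j = 1) (e₂ : ∑ j, f j * k j + ∑ j, g j * h' j = 0)
    (e₁' : ∑ j, f' j * h' j - ∑ j, g' j * k j = 1) :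
    ∑ r, ∑ s, (f s * f' r + g r * g' s) * (h' r * h s + k' r * k s)
      + ∑ s, ∑ r ∈ univ.filter (s < ·), (g' s * f r - g' r * f s) * (k r * h s - k s * h r)
      + ∑ s, ∑ r ∈ univ.filter (s < ·), (f' r * g s - f' s * g r) * (h' s * k' r - h' r * k' s)
      = 1 := by
  set a := fun j => f j * h j - g j * k' j
  set b := fun j => f j * k j + g j * h' j
  set a' := fun j => f' j * h' j - g' j * k j
  set b' := fun j => f' j * k' j + g' j * h j
  have ha : ∑ j, a j = 1 := by simpa only [a, sum_sub_distrib] using e₁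
  have hb : ∑ j, b j = 0 := by simpa only [b, sum_add_distrib] using e₂
  have ha' : ∑ j, a' j = 1 := by simpa only [a', sum_sub_distrib] using e₁'
  calc _ = ∑ r, ∑ s, (a s * a' r + b s * b' r) := by
        refine sum_sum_add_sum_filter_lt_eq_sum_sum _ _ _ _ (fun i => ?_) (fun i j => ?_)
        all_goals simp only [a, b, a', b']; ring
    _ = 1 := by simp only [sum_add_distrib, ← sum_mul, ha, hb, one_mul, zero_mul, add_zero, ha']

section Norms

variable {R : Type*} [SeminormedRing R]

theorem norm_mul_add_mul_le {x y u v : R} {M : ℝ}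
    (hx : ‖x‖ ≤ M) (hy : ‖y‖ ≤ M) (hu : ‖u‖ ≤ M) (hv : ‖v‖ ≤ M) :
    ‖x * y + u * v‖ ≤ 2 * M ^ 2 := by
  have hM : 0 ≤ M := (norm_nonneg x).trans hx
  calc ‖x * y + u * v‖ ≤ ‖x‖ * ‖y‖ + ‖u‖ * ‖v‖ :=
        (norm_add_le _ _).trans (add_le_add (norm_mul_le _ _) (norm_mul_le _ _))
    _ ≤ M * M + M * M := by gcongr
    _ = 2 * M ^ 2 := by ring

theorem norm_mul_sub_mul_le {x y u v : R} {M : ℝ}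
    (hx : ‖x‖ ≤ M) (hy : ‖y‖ ≤ M) (hu : ‖u‖ ≤ M) (hv : ‖v‖ ≤ M) :
    ‖x * y - u * v‖ ≤ 2 * M ^ 2 := by
  rw [sub_eq_add_neg, ← neg_mul]
  exact norm_mul_add_mul_le hx hy (by rwa [norm_neg]) hv

theorem sq_norm_sum_mul_le {ι : Type*} {s : Finset ι} {a b : ι → R} {C : ℝ}
    (hb : ∀ i ∈ s, ‖b i‖ ≤ C) :
    ‖∑ i ∈ s, a i * b i‖ ^ 2 ≤ C ^ 2 * #s * ∑ i ∈ s, ‖a i‖ ^ 2 := by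
  have hsum : ‖∑ i ∈ s, a i * b i‖ ≤ C * ∑ i ∈ s, ‖a i‖ := by
    rw [mul_sum]
    refine (norm_sum_le _ _).trans (sum_le_sum fun i hi => ?_)
    calc ‖a i * b i‖ ≤ ‖a i‖ * C :=
          (norm_mul_le _ _).trans (mul_le_mul_of_nonneg_left (hb i hi) (norm_nonneg _))
      _ = C * ‖a i‖ := mul_comm _ _
  calc ‖∑ i ∈ s, a i * b i‖ ^ 2 ≤ (C * ∑ i ∈ s, ‖a i‖) ^ 2 := by gcongr
    _ = C ^ 2 * (∑ i ∈ s, ‖a i‖) ^ 2 := mul_pow _ _ _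
    _ ≤ C ^ 2 * (#s * ∑ i ∈ s, ‖a i‖ ^ 2) := by gcongr; exact sq_sum_le_card_mul_sum_sq
    _ = C ^ 2 * #s * ∑ i ∈ s, ‖a i‖ ^ 2 := (mul_assoc _ _ _).symm

theorem sq_norm_sum_sum_mul_le {ι κ : Type*} [Fintype ι] [Fintype κ]
    {t : ι → Finset κ} {a b : ι → κ → R} {C : ℝ} (hb : ∀ i, ∀ j ∈ t i, ‖b i j‖ ≤ C) :
    ‖∑ i, ∑ j ∈ t i, a i j * b i j‖ ^ 2
      ≤ C ^ 2 * (Fintype.card ι * Fintype.card κ) * ∑ i, ∑ j ∈ t i, ‖a i j‖ ^ 2 := by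
  rw [sum_sigma', sum_sigma']
  refine (sq_norm_sum_mul_le fun x hx => hb x.1 x.2 (mem_sigma.1 hx).2).trans ?_
  gcongr
  calc (#(univ.sigma t) : ℝ) ≤ Fintype.card ((_ : ι) × κ) := by exact_mod_cast card_le_univ _
    _ = Fintype.card ι * Fintype.card κ := by simp

end Norms

theorem sq_norm_add_add_le {E : Type*} [SeminormedAddCommGroup E] (x y w : E) :
    ‖x + y + w‖ ^ 2 ≤ 3 * (‖x‖ ^ 2 + ‖y‖ ^ 2 + ‖w‖ ^ 2) := by
  nlinarith [norm_add₃_le (a := x) (b := y) (c := w), norm_nonneg (x + y + w),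
    sq_nonneg (‖x‖ - ‖y‖), sq_nonneg (‖x‖ - ‖w‖), sq_nonneg (‖y‖ - ‖w‖)]

theorem Delta_lower_bound_general (n : ℕ) (F G H K : Fin n → ℂ → ℂ) (M : ℝ)
    (hHbd : ∀ j, ∀ z ∈ ball (0 : ℂ) 1, ‖H j z‖ ≤ M)
    (hKbd : ∀ j, ∀ z ∈ ball (0 : ℂ) 1, ‖K j z‖ ≤ M)
    (h1 : ∀ z ∈ ball (0 : ℂ) 1,
      (∑ j, F j z * H j z) - ∑ j, G j z * hat (K j) z = 1)
    (h2 : ∀ z ∈ ball (0 : ℂ) 1,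
      (∑ j, F j z * K j z) + ∑ j, G j z * hat (H j) z = 0) :
    ∀ z ∈ ball (0 : ℂ) 1,
      ((∑ r, ∑ s, ‖F s z * hat (F r) z + G r z * hat (G s) z‖ ^ 2)
        + (∑ s, ∑ r ∈ univ.filter (fun r => s < r),
            ‖hat (G s) z * F r z - hat (G r) z * F s z‖ ^ 2)
        + (∑ s, ∑ r ∈ univ.filter (fun r => s < r),
            ‖hat (F r) z * G s z - hat (F s) z * G r z‖ ^ 2))
        * (3 * (2 * M ^ 2) ^ 2 * (n : ℝ) ^ 2) ≥ 1 := by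
  intro z hz
  have hz' : starRingEnd ℂ z ∈ ball (0 : ℂ) 1 := by simpa using hz
  have hH (j) : ‖H j z‖ ≤ M := hHbd j z hz
  have hK (j) : ‖K j z‖ ≤ M := hKbd j z hz
  have hH' (j) : ‖hat (H j) z‖ ≤ M := by simpa [hat] using hHbd j _ hz'
  have hK' (j) : ‖hat (K j) z‖ ≤ M := by simpa [hat] using hKbd j _ hz'
  have h1' : ∑ j, hat (F j) z * hat (H j) z - ∑ j, hat (G j) z * K j z = 1 := by
    simpa [hat] using congrArg (starRingEnd ℂ) (h1 _ hz')
  have hkey := bezout_pair_identity (F · z) (G · z) (H · z) (K · z) (fun j => hat (F j) z)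
    (fun j => hat (G j) z) (fun j => hat (H j) z) (fun j => hat (K j) z) (h1 z hz) (h2 z hz) h1'
  have b₁ := sq_norm_sum_sum_mul_le (t := fun _ => univ) (C := 2 * M ^ 2)
    (a := fun r s => F s z * hat (F r) z + G r z * hat (G s) z)
    fun r s _ => norm_mul_add_mul_le (hH' r) (hH s) (hK' r) (hK s)
  have b₂ := sq_norm_sum_sum_mul_le (t := fun s => univ.filter (s < ·)) (C := 2 * M ^ 2)
    (a := fun s r => hat (G s) z * F r z - hat (G r) z * F s z)
    fun s r _ => norm_mul_sub_mul_le (hK r) (hH s) (hK s) (hH r)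
  have b₃ := sq_norm_sum_sum_mul_le (t := fun s => univ.filter (s < ·)) (C := 2 * M ^ 2)
    (a := fun s r => hat (F r) z * G s z - hat (F s) z * G r z)
    fun s r _ => norm_mul_sub_mul_le (hH' s) (hK' r) (hH' r) (hK' s)
  simp only [Fintype.card_fin] at b₁ b₂ b₃
  rw [ge_iff_le]
  calc (1 : ℝ) = ‖_ + _ + _‖ ^ 2 := by rw [hkey, norm_one, one_pow]
    _ ≤ 3 * (_ + _ + _) := sq_norm_add_add_le _ _ _
    _ ≤ 3 * (_ + _ + _) :=
        mul_le_mul_of_nonneg_left (add_le_add (add_le_add b₁ b₂) b₃) zero_le_three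
    _ = _ := by ring

theorem Delta_lower_bound (n : ℕ) (F G H K : Fin n → ℂ → ℂ) (M : ℝ)
    (hFhol : ∀ j, DifferentiableOn ℂ (F j) (ball (0 : ℂ) 1))
    (hGhol : ∀ j, DifferentiableOn ℂ (G j) (ball (0 : ℂ) 1))
    (hHhol : ∀ j, DifferentiableOn ℂ (H j) (ball (0 : ℂ) 1))
    (hKhol : ∀ j, DifferentiableOn ℂ (K j) (ball (0 : ℂ) 1))
    (hHbd : ∀ j, ∀ z ∈ ball (0 : ℂ) 1, ‖H j z‖ ≤ M)
    (hKbd : ∀ j, ∀ z ∈ ball (0 : ℂ) 1, ‖K j z‖ ≤ M)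
    (h1 : ∀ z ∈ ball (0 : ℂ) 1,
      (∑ j, F j z * H j z) - ∑ j, G j z * hat (K j) z = 1)
    (h2 : ∀ z ∈ ball (0 : ℂ) 1,
      (∑ j, F j z * K j z) + ∑ j, G j z * hat (H j) z = 0) :
    ∀ z ∈ ball (0 : ℂ) 1,
      ((∑ r, ∑ s, ‖F s z * hat (F r) z + G r z * hat (G s) z‖ ^ 2)
        + (∑ s, ∑ r ∈ univ.filter (fun r => s < r),
            ‖hat (G s) z * F r z - hat (G r) z * F s z‖ ^ 2)
        + (∑ s, ∑ r ∈ univ.filter (fun r => s < r),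
            ‖hat (F r) z * G s z - hat (F s) z * G r z‖ ^ 2))
        * (3 * (2 * M ^ 2) ^ 2 * (n : ℝ) ^ 2) ≥ 1 :=
  Delta_lower_bound_general n F G H K M hHbd hKbd h1 h2
end

section
/- Suppose F₁, F₂, G₁, G₂, h₁, h₂, k₁, k₂ : D → ℂ satisfy F₁h₁ − G₁k̂₁ + F₂h₂ − G₂k̂₂ = 1 and F₁k₁ + G₁ĥ₁ + F₂k₂ + G₂ĥ₂ = 0 pointwise. Then F₁ = (F̂₁F₁+Ĝ₁G₁)ĥ₁ + (F̂₂F₁+Ĝ₁G₂)ĥ₂ + (Ĝ₁F₂−Ĝ₂F₁)k₂ pointwise on D. -/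
open Metric

theorem hat_apply (P : ℂ → ℂ) (z : ℂ) : hat P z = starRingEnd ℂ (P (starRingEnd ℂ z)) := rfl

@[simp]
theorem hat_hat (P : ℂ → ℂ) : hat (hat P) = P := by
  funext z
  simp [hat_apply]

theorem conj_mem_ball_zero {z : ℂ} {r : ℝ} (hz : z ∈ ball (0 : ℂ) r) :
    starRingEnd ℂ z ∈ ball (0 : ℂ) r := by
  simpa using hz

theorem F1_identity_two_generators (F₁ F₂ G₁ G₂ h₁ h₂ k₁ k₂ : ℂ → ℂ)
    (heq1 : ∀ z ∈ ball (0 : ℂ) 1,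
      F₁ z * h₁ z - G₁ z * hat k₁ z + F₂ z * h₂ z - G₂ z * hat k₂ z = 1)
    (heq2 : ∀ z ∈ ball (0 : ℂ) 1,
      F₁ z * k₁ z + G₁ z * hat h₁ z + F₂ z * k₂ z + G₂ z * hat h₂ z = 0) :
    ∀ z ∈ ball (0 : ℂ) 1,
      F₁ z = (hat F₁ z * F₁ z + hat G₁ z * G₁ z) * hat h₁ z
        + (hat F₂ z * F₁ z + hat G₁ z * G₂ z) * hat h₂ z
        + (hat G₁ z * F₂ z - hat G₂ z * F₁ z) * k₂ z := by
  intro z hz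
  have hat_heq1 : hat F₁ z * hat h₁ z - hat G₁ z * k₁ z + hat F₂ z * hat h₂ z
      - hat G₂ z * k₂ z = 1 := by
    have := congrArg (starRingEnd ℂ) (heq1 _ (conj_mem_ball_zero hz))
    simpa only [map_add, map_sub, map_mul, map_one, ← hat_apply, hat_hat] using this
  linear_combination -F₁ z * hat_heq1 - hat G₁ z * heq2 z hz
end

section
/- With the same definitions of H₁,K₁,H₂,K₂ in terms of h₁,h₂,k₁,k₂, F₁,F₂,G₁,G₂ and arbitrary β₁,…,β₄ as in the two-generator perturbation: if F₁k₁+G₁ĥ₁+F₂k₂+G₂ĥ₂ = 0 then F₁K₁+G₁Ĥ₁+F₂K₂+G₂Ĥ₂ = 0 pointwise. -/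
open Metric

/- In any commutative ring with an involutive endomorphism `σ`, the perturbation terms cancel
identically from `F₁K₁ + G₁σH₁ + F₂K₂ + G₂σH₂`: applying `σ` to `H₁, H₂` and using `σ ∘ σ = id`
turns their corrections into the negatives of those of `K₁, K₂`. -/
theorem second_bezout_perturbation_eq {R : Type*} [CommRing R] (σ : R →+* R)
    (hσ : ∀ x, σ (σ x) = x) (F₁ F₂ G₁ G₂ h₁ h₂ k₁ k₂ β₁ β₂ β₃ β₄ H₁ H₂ K₁ K₂ : R)
    (hH₁ : H₁ = h₁ + β₁ * (σ F₁ * F₂ + σ G₂ * G₁) + β₂ * (σ F₂ * F₂ + σ G₂ * G₂)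
      - β₃ * (σ F₂ * G₁ - σ F₁ * G₂))
    (hK₁ : K₁ = k₁ + σ β₁ * (σ F₁ * G₂ - σ F₂ * G₁) - σ β₃ * (σ F₁ * F₂ + σ G₂ * G₁)
      - σ β₄ * (σ F₂ * F₂ + σ G₂ * G₂))
    (hH₂ : H₂ = h₂ - β₁ * (σ F₁ * F₁ + σ G₁ * G₁) - β₂ * (σ F₂ * F₁ + σ G₁ * G₂)
      + β₄ * (σ F₁ * G₂ - σ F₂ * G₁))
    (hK₂ : K₂ = k₂ + σ β₂ * (σ F₁ * G₂ - σ F₂ * G₁) + σ β₃ * (σ F₁ * F₁ + σ G₁ * G₁)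
      + σ β₄ * (σ F₂ * F₁ + σ G₁ * G₂)) :
    F₁ * K₁ + G₁ * σ H₁ + F₂ * K₂ + G₂ * σ H₂ = F₁ * k₁ + G₁ * σ h₁ + F₂ * k₂ + G₂ * σ h₂ := by
  subst hH₁ hK₁ hH₂ hK₂
  simp only [map_add, map_sub, map_mul, hσ]
  ring

noncomputable def hatRingHom : (ℂ → ℂ) →+* (ℂ → ℂ) where
  toFun := hat
  map_one' := by ext; simp [hat]
  map_mul' _ _ := by ext; simp [hat]
  map_zero' := by ext; simp [hat]
  map_add' _ _ := by ext; simp [hat]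

theorem hatRingHom_hatRingHom (P : ℂ → ℂ) : hatRingHom (hatRingHom P) = P := by
  ext; simp [hatRingHom, hat]

theorem perturbation_preserves_second_Bezout
    (F₁ F₂ G₁ G₂ h₁ h₂ k₁ k₂ β₁ β₂ β₃ β₄ H₁ H₂ K₁ K₂ : ℂ → ℂ)
    (hH₁ : H₁ = fun z => h₁ z + β₁ z * (hat F₁ z * F₂ z + hat G₂ z * G₁ z)
      + β₂ z * (hat F₂ z * F₂ z + hat G₂ z * G₂ z)
      - β₃ z * (hat F₂ z * G₁ z - hat F₁ z * G₂ z))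
    (hK₁ : K₁ = fun z => k₁ z + hat β₁ z * (hat F₁ z * G₂ z - hat F₂ z * G₁ z)
      - hat β₃ z * (hat F₁ z * F₂ z + hat G₂ z * G₁ z)
      - hat β₄ z * (hat F₂ z * F₂ z + hat G₂ z * G₂ z))
    (hH₂ : H₂ = fun z => h₂ z - β₁ z * (hat F₁ z * F₁ z + hat G₁ z * G₁ z)
      - β₂ z * (hat F₂ z * F₁ z + hat G₁ z * G₂ z)
      + β₄ z * (hat F₁ z * G₂ z - hat F₂ z * G₁ z))
    (hK₂ : K₂ = fun z => k₂ z + hat β₂ z * (hat F₁ z * G₂ z - hat F₂ z * G₁ z)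
      + hat β₃ z * (hat F₁ z * F₁ z + hat G₁ z * G₁ z)
      + hat β₄ z * (hat F₂ z * F₁ z + hat G₁ z * G₂ z))
    (heq2 : ∀ z ∈ ball (0 : ℂ) 1,
      F₁ z * k₁ z + G₁ z * hat h₁ z + F₂ z * k₂ z + G₂ z * hat h₂ z = 0) :
    ∀ z ∈ ball (0 : ℂ) 1,
      F₁ z * K₁ z + G₁ z * hat H₁ z + F₂ z * K₂ z + G₂ z * hat H₂ z = 0 := by
  intro z hz
  -- The pointwise hypotheses are the ring-level ones in `ℂ → ℂ` up to definitional unfolding.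
  have key := second_bezout_perturbation_eq hatRingHom hatRingHom_hatRingHom
    F₁ F₂ G₁ G₂ h₁ h₂ k₁ k₂ β₁ β₂ β₃ β₄ H₁ H₂ K₁ K₂ hH₁ hK₁ hH₂ hK₂
  exact (congrFun key z).trans (heq2 z hz)
end

section
/- Let F, G : Fin n → (D → ℂ), and let η : Fin n × Fin n × Fin n → (D → ℂ) satisfy the alternating property η(r,s,j) = −η(j,s,r) = η(j,r,s). Then ∑_{j} ∑_{r≠j} ∑_{r<s, s≠j} Fⱼ (Ĝᵣ Fₛ − Ĝₛ Fᵣ) η(r,s,j) = 0 pointwise. -/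
open Metric Finset

theorem term_III_vanishes (n : ℕ) (F G : Fin n → ℂ → ℂ)
    (η : Fin n × Fin n × Fin n → ℂ → ℂ)
    (halt1 : ∀ r s j, η (r, s, j) = -η (j, s, r))
    (halt2 : ∀ r s j, η (r, s, j) = η (j, r, s)) :
    ∀ z ∈ ball (0 : ℂ) 1,
      ∑ j, ∑ r ∈ univ.filter (fun r => r ≠ j),
        ∑ s ∈ univ.filter (fun s => r < s ∧ s ≠ j),
          F j z * (hat (G r) z * F s z - hat (G s) z * F r z) * η (r, s, j) z = 0 := by
  intro z _
  have hswap12 : ∀ r s j, η (s, r, j) = -η (r, s, j) := by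
    intro r s j
    rw [halt2 s r j, halt1 r s j, neg_neg]
  have hswap23 : ∀ r s j, η (r, j, s) = -η (r, s, j) := by
    intro r s j
    rw [halt2 r j s, hswap12 r s j]
  set c : Fin n → Fin n → Fin n → ℂ := fun j r s =>
    if r ≠ j ∧ r < s ∧ s ≠ j then
      F j z * (hat (G r) z * F s z - hat (G s) z * F r z) * η (r, s, j) z
    else 0 with hcdef
  set a : Fin n → Fin n → Fin n → ℂ := fun j r s =>
    if j ≠ r ∧ j ≠ s ∧ r ≠ s then F j z * hat (G r) z * F s z * η (r, s, j) z
    else 0 with hadef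
  have hLHS : (∑ j, ∑ r ∈ univ.filter (fun r => r ≠ j),
        ∑ s ∈ univ.filter (fun s => r < s ∧ s ≠ j),
          F j z * (hat (G r) z * F s z - hat (G s) z * F r z) * η (r, s, j) z)
      = ∑ j, ∑ r, ∑ s, c j r s := by
    refine Finset.sum_congr rfl fun j _ => ?_
    rw [Finset.sum_filter]
    refine Finset.sum_congr rfl fun r _ => ?_
    by_cases h : r ≠ j
    · rw [if_pos h, Finset.sum_filter]
      refine Finset.sum_congr rfl fun s _ => ?_
      simp [hcdef, h, and_assoc]
    · rw [if_neg h]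
      simp [hcdef, h]
  have hca : ∀ j r s, c j r s + c j s r = a j r s + a j s r := by
    intro j r s
    simp only [hcdef, hadef]
    rw [hswap12 r s j]
    simp only [Pi.neg_apply]
    split_ifs <;> first | ring1 | (exfalso; omega)
  have h2 : (∑ j, ∑ r, ∑ s, c j r s) = ∑ j, ∑ r, ∑ s, a j r s := by
    have hding : ∀ (f : Fin n → Fin n → ℂ), (∑ r, ∑ s, f r s) = ∑ r, ∑ s, f s r :=
      fun f => Finset.sum_comm
    refine Finset.sum_congr rfl fun j _ => ?_
    have key : (∑ r, ∑ s, c j r s) + (∑ r, ∑ s, c j r s)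
        = (∑ r, ∑ s, a j r s) + (∑ r, ∑ s, a j r s) := by
      nth_rewrite 2 [hding (fun r s => c j r s)]
      nth_rewrite 2 [hding (fun r s => a j r s)]
      simp only [← Finset.sum_add_distrib]
      exact Finset.sum_congr rfl fun r _ =>
        Finset.sum_congr rfl fun s _ => hca j r s
    rw [← two_mul, ← two_mul] at key
    exact mul_left_cancel₀ two_ne_zero key
  have hpt : ∀ j r s, a j r s + a s r j = 0 := by
    intro j r s
    simp only [hadef]
    rw [hswap23 r s j]
    simp only [Pi.neg_apply]
    split_ifs with h1 h2 h2
    · ring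
    · exact absurd ⟨(h1.2.2).symm, (h1.2.1).symm, (h1.1).symm⟩ h2
    · exact absurd ⟨(h2.2.2).symm, (h2.2.1).symm, (h2.1).symm⟩ h1
    · simp
  have hre : (∑ j, ∑ r, ∑ s, a s r j) = ∑ j, ∑ r, ∑ s, a j r s := by
    calc (∑ j, ∑ r, ∑ s, a s r j)
        = ∑ j, ∑ s, ∑ r, a s r j := Finset.sum_congr rfl fun j _ => Finset.sum_comm
      _ = ∑ s, ∑ j, ∑ r, a s r j := Finset.sum_comm
      _ = ∑ j, ∑ r, ∑ s, a j r s := Finset.sum_congr rfl fun x _ => Finset.sum_comm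
  have h3 : (∑ j, ∑ r, ∑ s, a j r s) = 0 := by
    have key : (∑ j, ∑ r, ∑ s, a j r s) + (∑ j, ∑ r, ∑ s, a j r s) = 0 := by
      nth_rewrite 2 [← hre]
      simp only [← Finset.sum_add_distrib]
      exact Finset.sum_eq_zero fun j _ => Finset.sum_eq_zero fun r _ =>
        Finset.sum_eq_zero fun s _ => hpt j r s
    rw [← two_mul] at key
    exact (mul_eq_zero.mp key).resolve_left two_ne_zero
  rw [hLHS, h2]
  exact h3
end

section
/- Let f be a slice regular function on the quaternionic unit ball 𝔹 with δ ≤ |f(q)| ≤ 1 for all q ∈ 𝔹 for some δ > 0. Then the symmetrization f^s = f * f^c satisfies |f^s(q)| ≥ δ² for all q ∈ 𝔹, and the *-inverse g := (f^s)^{-1} f^c satisfies f * g = 1 on 𝔹 with sup_{q∈𝔹} |g(q)| ≤ (1/δ²) · sup_{q∈𝔹}|f(q)|. -/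
open Quaternion Classical

/-- The slice regular (star) product:
`(f * g)(q) = f(q) · g(f(q)⁻¹ q f(q))` when `f(q) ≠ 0`, and `0` otherwise. -/
noncomputable def sprod (f g : Quaternion ℝ → Quaternion ℝ) : Quaternion ℝ → Quaternion ℝ :=
  fun q => if f q = 0 then 0 else f q * g ((f q)⁻¹ * q * f q)

open RealInnerProductSpace

namespace CoronaAux
/-- The quaternion `i`. -/
def qi : Quaternion ℝ := ⟨0, 1, 0, 0⟩

lemma qi_re : qi.re = 0 := rfl

lemma qi_norm : ‖qi‖ = 1 := by
  have h2 : normSq qi = 1 := by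
    rw [Quaternion.normSq_def']
    show (0:ℝ)^2 + 1^2 + 0^2 + 0^2 = 1
    norm_num
  have h3 : ‖qi‖ * ‖qi‖ = 1 := by rw [← Quaternion.normSq_eq_norm_mul_self, h2]
  nlinarith [norm_nonneg qi]

lemma sq_eq_sq'' {A B : ℝ} (h : A ^ 2 = B ^ 2) (hA : 0 ≤ A) (hB : 0 ≤ B) : A = B := by
  nlinarith



lemma star_eq_self' {x : Quaternion ℝ} (h : star x = x) : x = ((x.re : ℝ) : Quaternion ℝ) := by
  rw [Quaternion.ext_iff] at h ⊢
  obtain ⟨-, h1, h2, h3⟩ := h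
  simp only [Quaternion.imI_star, Quaternion.imJ_star, Quaternion.imK_star] at h1 h2 h3
  refine ⟨by simp, by simp; linarith, by simp; linarith, by simp; linarith⟩

lemma commute_of_star {x : Quaternion ℝ} (h : star x = x) (y : Quaternion ℝ) :
    x * y = y * x := by
  rw [star_eq_self' h]
  exact Quaternion.coe_commutes _ _

lemma conj_pow {u : Quaternion ℝ} (q : Quaternion ℝ) (hu : u ≠ 0) (n : ℕ) :
    (u⁻¹ * q * u) ^ n = u⁻¹ * q ^ n * u := by
  induction n with
  | zero => simp [inv_mul_cancel₀ hu]
  | succ n ih =>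
      rw [pow_succ, ih, pow_succ]
      have : u * (u⁻¹ * q * u) = q * u := by
        rw [← mul_assoc, ← mul_assoc, mul_inv_cancel₀ hu, one_mul]
      rw [mul_assoc (u⁻¹ * q ^ n) u (u⁻¹ * q * u), this, ← mul_assoc, ← mul_assoc]

lemma conj_norm {u : Quaternion ℝ} (q : Quaternion ℝ) (hu : u ≠ 0) :
    ‖u⁻¹ * q * u‖ = ‖q‖ := by
  rw [norm_mul, norm_mul, norm_inv]
  have : ‖u‖ ≠ 0 := by simpa using hu
  field_simp

lemma pure_star {u : Quaternion ℝ} (h : u.re = 0) : star u = -u := by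
  ext <;> simp [h]

lemma pure_mul_self {u : Quaternion ℝ} (h : u.re = 0) (hn : ‖u‖ = 1) : u * u = -1 := by
  have h1 : u * star u = ((normSq u : ℝ) : Quaternion ℝ) := Quaternion.self_mul_star u
  rw [pure_star h, mul_neg] at h1
  have h2 : normSq u = 1 := by
    rw [Quaternion.normSq_eq_norm_mul_self, hn, one_mul]
  rw [h2] at h1
  have := congrArg Neg.neg h1
  simpa using this

lemma norm_sq_decomp (x : Quaternion ℝ) : ‖x‖ ^ 2 = x.re ^ 2 + ‖x.im‖ ^ 2 := by
  have h1 : ‖x‖ ^ 2 = normSq x := by rw [sq, Quaternion.normSq_eq_norm_mul_self]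
  have h2 : ‖x.im‖ ^ 2 = normSq x.im := by rw [sq, Quaternion.normSq_eq_norm_mul_self]
  rw [h1, h2, Quaternion.normSq_def', Quaternion.normSq_def']
  simp [Quaternion.re_im]
  ring

lemma mul_re_comm (x y : Quaternion ℝ) : (x * y).re = (y * x).re := by
  simp [Quaternion.re_mul]; ring

lemma inner_pure {c J : Quaternion ℝ} (hJ : J.re = 0) : ⟪c, J⟫ = ⟪c.im, J⟫ := by
  simp only [Quaternion.inner_def, Quaternion.re_mul, Quaternion.re_star, Quaternion.imI_star,
    Quaternion.imJ_star, Quaternion.imK_star, Quaternion.re_im, Quaternion.imI_im,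
    Quaternion.imJ_im, Quaternion.imK_im, hJ]
  ring

lemma re_mul_pure {c J : Quaternion ℝ} (hJ : J.re = 0) : (c * J).re = -⟪c, J⟫ := by
  simp only [Quaternion.inner_def, Quaternion.re_mul, Quaternion.re_star, Quaternion.imI_star,
    Quaternion.imJ_star, Quaternion.imK_star, hJ]
  ring

lemma tsum_antidiag (F : ℕ × ℕ → Quaternion ℝ) (h : Summable F) :
    ∑' x : ℕ × ℕ, F x = ∑' N : ℕ, ∑ kl ∈ Finset.HasAntidiagonal.antidiagonal N, F kl := by
  rw [← Finset.HasAntidiagonal.sigmaAntidiagonalEquivProd.tsum_eq F]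
  have hs : Summable (fun c : (Σ n : ℕ, Finset.HasAntidiagonal.antidiagonal n) =>
      F (Finset.HasAntidiagonal.sigmaAntidiagonalEquivProd c)) :=
    Finset.HasAntidiagonal.sigmaAntidiagonalEquivProd.summable_iff.mpr h
  rw [Summable.tsum_sigma' (fun n => (hasSum_fintype _).summable) hs]
  refine tsum_congr fun N => ?_
  rw [tsum_fintype]
  exact Finset.sum_finset_coe _ _



lemma exists_orth (v : Quaternion ℝ) :
    ∃ w : Quaternion ℝ, ‖w‖ = 1 ∧ ⟪v, w⟫ = 0 ∧ ⟪1, w⟫ = 0 := by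
  classical
  set K := Submodule.span ℝ ({1, v} : Set (Quaternion ℝ)) with hK
  have hne : Kᗮ ≠ ⊥ := by
    intro hbot
    have h1 : Module.finrank ℝ K ≤ 2 := by
      refine (finrank_span_le_card ({1, v} : Set (Quaternion ℝ))).trans ?_
      refine (Finset.card_le_card ?_).trans (?_ : ({1, v} : Finset (Quaternion ℝ)).card ≤ 2)
      · intro x hx; simpa using hx
      · exact (Finset.card_insert_le _ _).trans (by simp)
    have h2 := Submodule.finrank_add_finrank_orthogonal (K := K)
    rw [hbot] at h2
    simp only [finrank_bot, add_zero] at h2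
    rw [Quaternion.finrank_eq_four] at h2
    omega
  obtain ⟨w0, hw0S, hw0⟩ := Submodule.exists_mem_ne_zero_of_ne_bot hne
  have horth := (Submodule.mem_orthogonal K w0).mp hw0S
  refine ⟨‖w0‖⁻¹ • w0, ?_, ?_, ?_⟩
  · rw [norm_smul]
    simp [norm_ne_zero_iff.mpr hw0]
  · rw [real_inner_smul_right,
      horth v (Submodule.subset_span (by simp : v ∈ ({1, v} : Set (Quaternion ℝ)))), mul_zero]
  · rw [real_inner_smul_right,
      horth 1 (Submodule.subset_span (by simp : (1:Quaternion ℝ) ∈ ({1, v} : Set (Quaternion ℝ)))),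
      mul_zero]

lemma exists_unit_pure (v : Quaternion ℝ) (hv : v.re = 0) (s : ℝ) (hs : |s| ≤ ‖v‖) :
    ∃ J : Quaternion ℝ, J.re = 0 ∧ ‖J‖ = 1 ∧ ⟪v, J⟫ = s := by
  obtain ⟨w, hw1, hwv, hw2⟩ := exists_orth v
  have hwre : w.re = 0 := by
    have h : ⟪(1:Quaternion ℝ), w⟫ = w.re := by
      simp [Quaternion.inner_def, Quaternion.re_mul]
    rw [h] at hw2; exact hw2
  by_cases hv0 : v = 0
  · have hs0 : s = 0 := by
      rw [hv0, norm_zero] at hs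
      exact abs_eq_zero.mp (le_antisymm hs (abs_nonneg s))
    exact ⟨w, hwre, hw1, by simp [hv0, hs0]⟩
  · have hvn : (0:ℝ) < ‖v‖ := norm_pos_iff.mpr hv0
    set t := Real.sqrt (1 - (s / ‖v‖)^2) with ht
    have hsq : (s / ‖v‖)^2 ≤ 1 := by
      rw [div_pow, div_le_one (by positivity)]
      calc s^2 = |s|^2 := (sq_abs s).symm
        _ ≤ ‖v‖^2 := by nlinarith [abs_nonneg s]
    have ht2 : t^2 = 1 - (s / ‖v‖)^2 := Real.sq_sqrt (by linarith)
    refine ⟨(s / ‖v‖^2) • v + t • w, ?_, ?_, ?_⟩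
    · simp [hv, hwre]
    · have hortho : ⟪(s / ‖v‖^2) • v, t • w⟫ = 0 := by
        rw [real_inner_smul_left, real_inner_smul_right, hwv]; ring
      have hn2 : ‖(s / ‖v‖^2) • v + t • w‖^2 = 1 := by
        rw [norm_add_sq_real, hortho]
        rw [norm_smul, norm_smul]
        have hvv : ‖v‖ ≠ 0 := by positivity
        rw [mul_pow, mul_pow, Real.norm_eq_abs, Real.norm_eq_abs, sq_abs, sq_abs, hw1, ht2]
        field_simp
        ring
      calc ‖(s / ‖v‖^2) • v + t • w‖
          = Real.sqrt (‖(s / ‖v‖^2) • v + t • w‖^2) := (Real.sqrt_sq (norm_nonneg _)).symm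
        _ = 1 := by rw [hn2, Real.sqrt_one]
    · rw [inner_add_right, real_inner_smul_right, real_inner_smul_right, hwv,
        real_inner_self_eq_norm_sq]
      field_simp
      simp



lemma slice_pow (x y : ℝ) (J : Quaternion ℝ) (hJ : J * J = -1) (n : ℕ) :
    ((x : Quaternion ℝ) + y • J) ^ n
      = ((((⟨x, y⟩ : ℂ)) ^ n).re : Quaternion ℝ) + ((⟨x, y⟩ : ℂ) ^ n).im • J := by
  induction n with
  | zero => simp
  | succ n ih =>
    rw [pow_succ, ih, pow_succ]
    have hre : ((⟨x, y⟩ : ℂ) ^ n * ⟨x, y⟩).re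
        = ((⟨x, y⟩ : ℂ)^n).re * x - ((⟨x, y⟩ : ℂ)^n).im * y := by
      rw [Complex.mul_re]
    have him : ((⟨x, y⟩ : ℂ) ^ n * ⟨x, y⟩).im
        = ((⟨x, y⟩ : ℂ)^n).re * y + ((⟨x, y⟩ : ℂ)^n).im * x := by
      rw [Complex.mul_im]
    rw [hre, him]
    set r := ((⟨x, y⟩ : ℂ)^n).re
    set s := ((⟨x, y⟩ : ℂ)^n).im
    have hcoe : ∀ c : ℝ, (c : Quaternion ℝ) = c • (1 : Quaternion ℝ) := by
      intro c
      rw [show (1 : Quaternion ℝ) = ((1:ℝ) : Quaternion ℝ) from rfl, Quaternion.smul_coe]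
      norm_num
    rw [hcoe r, hcoe (r * x - s * y)]
    rw [hcoe x]
    simp only [add_mul, mul_add, smul_mul_assoc, mul_smul_comm, smul_smul, one_mul, mul_one,
      hJ, smul_neg]
    module

lemma norm_xyJ (x y : ℝ) {J : Quaternion ℝ} (hre : J.re = 0) (hn : ‖J‖ = 1) :
    ‖(x : Quaternion ℝ) + y • J‖ ^ 2 = x ^ 2 + y ^ 2 := by
  rw [norm_add_sq_real]
  have h1 : ⟪((x : ℝ) : Quaternion ℝ), y • J⟫ = 0 := by
    rw [real_inner_smul_right]
    have : ⟪((x : ℝ) : Quaternion ℝ), J⟫ = x * J.re := by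
      simp [Quaternion.inner_def, Quaternion.re_mul]
    rw [this, hre]; ring
  rw [h1, norm_smul, hn, Quaternion.norm_coe]
  simp [sq_abs]

lemma fc_norm_exists
    (a : ℕ → Quaternion ℝ) (f fc : Quaternion ℝ → Quaternion ℝ)
    (hf : ∀ q : Quaternion ℝ, ‖q‖ < 1 → f q = ∑' n : ℕ, q ^ n * a n)
    (hfc : ∀ q : Quaternion ℝ, ‖q‖ < 1 → fc q = ∑' n : ℕ, q ^ n * star (a n))
    (hns : ∀ q : Quaternion ℝ, ‖q‖ < 1 → Summable (fun n : ℕ => ‖q ^ n * a n‖))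
    (p : Quaternion ℝ) (hp : ‖p‖ < 1) :
    ∃ q : Quaternion ℝ, ‖q‖ < 1 ∧ ‖fc p‖ = ‖f q‖ := by
  classical
  set x := p.re with hx
  set y := ‖p.im‖ with hy
  -- the imaginary unit of the slice containing p
  set I : Quaternion ℝ := if h : p.im = 0 then qi else ‖p.im‖⁻¹ • p.im with hI
  have hIre : I.re = 0 := by
    rw [hI]; split
    · exact qi_re
    · simp [Quaternion.re_smul]
  have hIn : ‖I‖ = 1 := by
    rw [hI]; split
    · exact qi_norm
    · rename_i h
      rw [norm_smul]
      simp [norm_ne_zero_iff.mpr h]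
  have hII : I * I = -1 := pure_mul_self hIre hIn
  have hpxy : p = (x : Quaternion ℝ) + y • I := by
    rw [hI]; split
    · rename_i h
      rw [hy, h, norm_zero, zero_smul, add_zero]
      have := Quaternion.re_add_im p
      rw [h, add_zero] at this
      exact this.symm
    · rename_i h
      rw [hy, smul_smul, mul_inv_cancel₀ (norm_ne_zero_iff.mpr h), one_smul]
      exact (Quaternion.re_add_im p).symm
  set z : ℂ := ⟨x, y⟩ with hz
  have habsz : ‖z‖ = ‖p‖ := by
    have h1 : ‖p‖ ^ 2 = x ^ 2 + y ^ 2 := norm_sq_decomp p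
    rw [Complex.norm_def, Complex.normSq_mk]
    rw [show x * x + y * y = ‖p‖ ^ 2 by rw [h1]; ring]
    exact Real.sqrt_sq (norm_nonneg p)
  have hdom : Summable (fun n : ℕ => ‖p‖ ^ n * ‖a n‖) := by
    have := hns p hp
    simpa [norm_mul, norm_pow] using this
  have hsmul_sum : ∀ (c : ℕ → ℝ), (∀ n, |c n| ≤ ‖p‖ ^ n) → ∀ (b : ℕ → Quaternion ℝ),
      (∀ n, ‖b n‖ = ‖a n‖) → Summable (fun n => c n • b n) := by
    intro c hc b hb
    apply Summable.of_norm
    refine Summable.of_nonneg_of_le (fun n => norm_nonneg _) (fun n => ?_) hdom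
    rw [norm_smul, hb, Real.norm_eq_abs]
    exact mul_le_mul_of_nonneg_right (hc n) (norm_nonneg _)
  have hcre : ∀ n : ℕ, |(z ^ n).re| ≤ ‖p‖ ^ n := fun n => by
    calc |(z ^ n).re| ≤ ‖z ^ n‖ := Complex.abs_re_le_norm _
      _ = ‖p‖ ^ n := by rw [norm_pow, habsz]
  have hcim : ∀ n : ℕ, |(z ^ n).im| ≤ ‖p‖ ^ n := fun n => by
    calc |(z ^ n).im| ≤ ‖z ^ n‖ := Complex.abs_im_le_norm _
      _ = ‖p‖ ^ n := by rw [norm_pow, habsz]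
  set α := ∑' n : ℕ, (z ^ n).re • a n with hα
  set β := ∑' n : ℕ, (z ^ n).im • a n with hβ
  -- expansion of the series at x + y•J
  have hexp : ∀ J : Quaternion ℝ, J * J = -1 → ∀ b : ℕ → Quaternion ℝ,
      (∀ n, ‖b n‖ = ‖a n‖) →
      (∑' n : ℕ, ((x : Quaternion ℝ) + y • J) ^ n * b n)
        = (∑' n : ℕ, (z ^ n).re • b n) + J * ∑' n : ℕ, (z ^ n).im • b n := by
    intro J hJ b hb
    have h1 : ∀ n : ℕ, ((x : Quaternion ℝ) + y • J) ^ n * b n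
        = (z ^ n).re • b n + J * ((z ^ n).im • b n) := by
      intro n
      rw [slice_pow x y J hJ n, add_mul, Quaternion.coe_mul_eq_smul, smul_mul_assoc,
        mul_smul_comm]
    rw [tsum_congr h1,
      Summable.tsum_add (hsmul_sum _ hcre b hb) ((hsmul_sum _ hcim b hb).mul_left J),
      tsum_mul_left]
  -- the value of fc at p
  have hfcp : fc p = star α + I * star β := by
    rw [hfc p hp]
    nth_rewrite 1 [hpxy]
    rw [hexp I hII (fun n => star (a n)) (fun n => Quaternion.norm_star (a n))]
    congr 1
    · rw [hα, tsum_star]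
      exact tsum_congr fun n => (Quaternion.star_smul _ _).symm
    · congr 1
      rw [hβ, tsum_star]
      exact tsum_congr fun n => (Quaternion.star_smul _ _).symm
  -- the value of f at x + y•J
  have hfJ : ∀ J : Quaternion ℝ, J.re = 0 → ‖J‖ = 1 →
      f ((x : Quaternion ℝ) + y • J) = α + J * β := by
    intro J hJre hJn
    have hlt : ‖(x : Quaternion ℝ) + y • J‖ < 1 := by
      have h1 := norm_xyJ x y hJre hJn
      have h2 : ‖p‖ ^ 2 = x ^ 2 + y ^ 2 := norm_sq_decomp p
      have h3 : ‖(x : Quaternion ℝ) + y • J‖ = ‖p‖ :=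
        sq_eq_sq'' (h1.trans h2.symm) (norm_nonneg _) (norm_nonneg _)
      rw [h3]; exact hp
    rw [hf _ hlt, hexp J (pure_mul_self hJre hJn) a (fun n => rfl)]
  -- norm of fc p
  have hnfc : ‖fc p‖ ^ 2 = ‖α‖ ^ 2 + ‖β‖ ^ 2 - 2 * ((star α * β) * I).re := by
    rw [hfcp, norm_add_sq_real]
    have h1 : ‖star α‖ = ‖α‖ := Quaternion.norm_star α
    have h2 : ‖I * star β‖ = ‖β‖ := by rw [norm_mul, hIn, one_mul, Quaternion.norm_star]
    have h3 : ⟪star α, I * star β⟫ = -((star α * β) * I).re := by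
      rw [Quaternion.inner_def, star_mul, star_star, pure_star hIre]
      rw [show star α * (β * -I) = -(star α * β * I) by
        rw [mul_neg, mul_neg, mul_assoc]]
      simp
    rw [h1, h2, h3]; ring
  -- norm of f (x + y•J)
  have hnf : ∀ J : Quaternion ℝ, J.re = 0 → ‖J‖ = 1 →
      ‖α + J * β‖ ^ 2 = ‖α‖ ^ 2 + ‖β‖ ^ 2 - 2 * ((α * star β) * J).re := by
    intro J hJre hJn
    rw [norm_add_sq_real]
    have h2 : ‖J * β‖ = ‖β‖ := by rw [norm_mul, hJn, one_mul]
    have h3 : ⟪α, J * β⟫ = -((α * star β) * J).re := by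
      rw [Quaternion.inner_def, star_mul, pure_star hJre]
      rw [show α * (star β * -J) = -(α * star β * J) by
        rw [mul_neg, mul_neg, mul_assoc]]
      simp
    rw [h2, h3]; ring
  -- choose the right J
  set c := α * star β with hc
  set d := star α * β with hd
  have hcd_re : c.re = d.re := by
    rw [hc, hd]
    rw [mul_re_comm (star α) β]
    rw [show β * star α = star (α * star β) by rw [star_mul, star_star]]
    rw [Quaternion.re_star]
  have hcd_norm : ‖c‖ = ‖d‖ := by
    rw [hc, hd, norm_mul, norm_mul, Quaternion.norm_star, Quaternion.norm_star]
  have him : ‖c.im‖ = ‖d.im‖ := by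
    have h1 : ‖c.im‖ ^ 2 = ‖d.im‖ ^ 2 := by
      have hcs := norm_sq_decomp c
      have hds := norm_sq_decomp d
      rw [hcd_re, hcd_norm] at hcs
      linarith
    exact sq_eq_sq'' h1 (norm_nonneg _) (norm_nonneg _)
  have habs : |⟪d.im, I⟫| ≤ ‖c.im‖ := by
    calc |⟪d.im, I⟫| ≤ ‖d.im‖ * ‖I‖ := abs_real_inner_le_norm _ _
      _ = ‖c.im‖ := by rw [hIn, mul_one, him]
  obtain ⟨J, hJre, hJn, hJi⟩ := exists_unit_pure c.im (Quaternion.re_im c) ⟪d.im, I⟫ habs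
  have hkey : (c * J).re = (d * I).re := by
    rw [re_mul_pure hJre]
    rw [re_mul_pure hIre]
    rw [inner_pure hJre]
    rw [inner_pure hIre]
    rw [hJi]
  refine ⟨(x : Quaternion ℝ) + y • J, ?_, ?_⟩
  · have h1 := norm_xyJ x y hJre hJn
    have h2 : ‖p‖ ^ 2 = x ^ 2 + y ^ 2 := norm_sq_decomp p
    have h3 : ‖(x : Quaternion ℝ) + y • J‖ = ‖p‖ :=
      sq_eq_sq'' (h1.trans h2.symm) (norm_nonneg _) (norm_nonneg _)
    rw [h3]; exact hp
  · have h1 : ‖fc p‖ ^ 2 = ‖f ((x : Quaternion ℝ) + y • J)‖ ^ 2 := by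
      rw [hnfc, hfJ J hJre hJn, hnf J hJre hJn, ← hkey]
    exact sq_eq_sq'' h1 (norm_nonneg _) (norm_nonneg _)
end CoronaAux

open CoronaAux

set_option maxHeartbeats 2000000 in
theorem one_generator_quaternionic_corona
    (a : ℕ → Quaternion ℝ) (f : Quaternion ℝ → Quaternion ℝ)
    (hf : ∀ q : Quaternion ℝ, ‖q‖ < 1 → f q = ∑' n : ℕ, q ^ n * a n)
    (fc : Quaternion ℝ → Quaternion ℝ)
    (hfc : ∀ q : Quaternion ℝ, ‖q‖ < 1 → fc q = ∑' n : ℕ, q ^ n * star (a n))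
    (fs : Quaternion ℝ → Quaternion ℝ) (hfs : fs = sprod f fc)
    (g : Quaternion ℝ → Quaternion ℝ) (hg : ∀ q, g q = (fs q)⁻¹ * fc q)
    (δ : ℝ) (hδ : 0 < δ)
    (hbd : ∀ q : Quaternion ℝ, ‖q‖ < 1 → δ ≤ ‖f q‖ ∧ ‖f q‖ ≤ 1) :
    (∀ q : Quaternion ℝ, ‖q‖ < 1 → δ ^ 2 ≤ ‖fs q‖) ∧
    (∀ q : Quaternion ℝ, ‖q‖ < 1 → sprod f g q = 1) ∧
    (⨆ q : {q : Quaternion ℝ // ‖q‖ < 1}, ‖g q.1‖)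
      ≤ (1 / δ ^ 2) * ⨆ q : {q : Quaternion ℝ // ‖q‖ < 1}, ‖f q.1‖ := by
  classical
  have hfne : ∀ q : Quaternion ℝ, ‖q‖ < 1 → f q ≠ 0 := by
    intro q hq h0
    have h1 := (hbd q hq).1
    rw [h0, norm_zero] at h1
    linarith
  have hsum : ∀ q : Quaternion ℝ, ‖q‖ < 1 → Summable (fun n : ℕ => q ^ n * a n) := by
    intro q hq
    by_contra hn
    exact hfne q hq (by rw [hf q hq, tsum_eq_zero_of_not_summable hn])
  have hnormsum : ∀ q : Quaternion ℝ, ‖q‖ < 1 → Summable (fun n : ℕ => ‖q ^ n * a n‖) :=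
    fun q hq => summable_norm_iff.mpr (hsum q hq)
  have hconj_lt : ∀ (q u : Quaternion ℝ), ‖q‖ < 1 → u ≠ 0 → ‖u⁻¹ * q * u‖ < 1 := by
    intro q u hq hu
    rw [conj_norm q hu]; exact hq
  have hkeyJ : ∀ p : Quaternion ℝ, ‖p‖ < 1 → ∃ q', ‖q'‖ < 1 ∧ ‖fc p‖ = ‖f q'‖ :=
    fun p hp => fc_norm_exists a f fc hf hfc hnormsum p hp
  -- unfolding of fs
  have hfs0 : ∀ q : Quaternion ℝ, ‖q‖ < 1 →
      fs q = f q * fc ((f q)⁻¹ * q * f q) := by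
    intro q hq
    rw [hfs]
    show (if f q = 0 then 0 else f q * fc ((f q)⁻¹ * q * f q)) = _
    rw [if_neg (hfne q hq)]
  -- part 1
  have h1 : ∀ q : Quaternion ℝ, ‖q‖ < 1 → δ ^ 2 ≤ ‖fs q‖ := by
    intro q hq
    have hu := hfne q hq
    have hplt := hconj_lt q (f q) hq hu
    obtain ⟨q', hq', he⟩ := hkeyJ _ hplt
    rw [hfs0 q hq, norm_mul, he, sq]
    exact mul_le_mul (hbd q hq).1 (hbd q' hq').1 (le_of_lt hδ) (norm_nonneg _)
  -- fs as a single power series with coefficients on the right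
  have hfs1 : ∀ q : Quaternion ℝ, ‖q‖ < 1 →
      fs q = ∑' n : ℕ, q ^ n * (f q * star (a n)) := by
    intro q hq
    have hu := hfne q hq
    have hplt := hconj_lt q (f q) hq hu
    rw [hfs0 q hq, hfc _ hplt, ← tsum_mul_left]
    refine tsum_congr fun n => ?_
    rw [conj_pow q hu n]
    simp only [← mul_assoc]
    rw [mul_inv_cancel₀ hu, one_mul]
  have hfcp_eq : ∀ q : Quaternion ℝ, ‖q‖ < 1 →
      fc ((f q)⁻¹ * q * f q) = (f q)⁻¹ * fs q := by
    intro q hq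
    rw [hfs0 q hq, ← mul_assoc, inv_mul_cancel₀ (hfne q hq), one_mul]
  -- double series
  have hFsum : ∀ q : Quaternion ℝ, ‖q‖ < 1 →
      Summable (fun x : ℕ × ℕ => q ^ (x.1 + x.2) * (a x.2 * star (a x.1))) := by
    intro q hq
    apply Summable.of_norm
    have hprod : Summable (fun x : ℕ × ℕ => ‖q ^ x.1 * a x.1‖ * ‖q ^ x.2 * a x.2‖) :=
      (hnormsum q hq).mul_of_nonneg (hnormsum q hq)
        (fun n => norm_nonneg _) (fun n => norm_nonneg _)
    refine hprod.congr fun x => ?_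
    simp only [norm_mul, norm_pow, Quaternion.norm_star, pow_add]
    ring
  have hfib : ∀ q : Quaternion ℝ, ‖q‖ < 1 → ∀ n : ℕ,
      Summable (fun m : ℕ => q ^ (n + m) * (a m * star (a n))) := by
    intro q hq n
    have h2 := ((hsum q hq).mul_right (star (a n))).mul_left (q ^ n)
    refine h2.congr fun m => ?_
    rw [pow_add]
    simp [mul_assoc]
  have hfs2 : ∀ q : Quaternion ℝ, ‖q‖ < 1 →
      fs q = ∑' x : ℕ × ℕ, q ^ (x.1 + x.2) * (a x.2 * star (a x.1)) := by
    intro q hq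
    rw [hfs1 q hq]
    have hterm : ∀ n : ℕ, q ^ n * (f q * star (a n))
        = ∑' m : ℕ, q ^ (n + m) * (a m * star (a n)) := by
      intro n
      rw [hf q hq, ← tsum_mul_right, ← tsum_mul_left]
      refine tsum_congr fun m => ?_
      rw [pow_add]
      simp [mul_assoc]
    rw [tsum_congr hterm]
    exact (Summable.tsum_prod' (hFsum q hq) (fun n => hfib q hq n)).symm
  -- real coefficients
  set co : ℕ → Quaternion ℝ :=
    fun N => ∑ kl ∈ Finset.HasAntidiagonal.antidiagonal N, (a kl.2 * star (a kl.1)) with hco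
  have hco_star : ∀ N, star (co N) = co N := by
    intro N
    have hN : co N = ∑ kl ∈ Finset.HasAntidiagonal.antidiagonal N, a kl.2 * star (a kl.1) := by rw [hco]
    calc star (co N)
        = ∑ kl ∈ Finset.HasAntidiagonal.antidiagonal N, star (a kl.2 * star (a kl.1)) := by rw [hN, star_sum]
      _ = ∑ kl ∈ Finset.HasAntidiagonal.antidiagonal N, a kl.1 * star (a kl.2) := by
          refine Finset.sum_congr rfl fun kl _ => ?_
          rw [star_mul, star_star]
      _ = ∑ kl ∈ Finset.HasAntidiagonal.antidiagonal N, a kl.2 * star (a kl.1) := by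
          conv_rhs => rw [← Finset.HasAntidiagonal.map_swap_antidiagonal (n := N), Finset.sum_map]
          exact Finset.sum_congr rfl fun kl _ => rfl
      _ = co N := hN.symm
  have hfs3 : ∀ q : Quaternion ℝ, ‖q‖ < 1 → fs q = ∑' N : ℕ, q ^ N * co N := by
    intro q hq
    rw [hfs2 q hq, tsum_antidiag _ (hFsum q hq)]
    refine tsum_congr fun N => ?_
    rw [hco, Finset.mul_sum]
    refine Finset.sum_congr rfl fun kl hkl => ?_
    rw [Finset.HasAntidiagonal.mem_antidiagonal] at hkl
    rw [hkl]
  have hfs_conj : ∀ q : Quaternion ℝ, ‖q‖ < 1 → ∀ u : Quaternion ℝ, u ≠ 0 →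
      fs (u⁻¹ * q * u) = u⁻¹ * (fs q * u) := by
    intro q hq u hu
    rw [hfs3 _ (hconj_lt q u hq hu), hfs3 q hq]
    rw [← tsum_mul_right, ← tsum_mul_left]
    refine tsum_congr fun N => ?_
    rw [conj_pow q hu N]
    simp only [← mul_assoc]
    rw [mul_assoc (u⁻¹ * q ^ N) u (co N), ← commute_of_star (hco_star N) u, ← mul_assoc]
  -- part 2
  have h2 : ∀ q : Quaternion ℝ, ‖q‖ < 1 → sprod f g q = 1 := by
    intro q hq
    have hu := hfne q hq
    have hfs_ne : fs q ≠ 0 := by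
      intro h0
      have := h1 q hq
      rw [h0, norm_zero] at this
      nlinarith
    have hfsp : fs ((f q)⁻¹ * q * f q) = (f q)⁻¹ * (fs q * f q) :=
      hfs_conj q hq (f q) hu
    show (if f q = 0 then 0 else f q * g ((f q)⁻¹ * q * f q)) = 1
    rw [if_neg hu, hg, hfsp, hfcp_eq q hq]
    rw [mul_inv_rev, mul_inv_rev, inv_inv]
    simp only [← mul_assoc]
    rw [mul_inv_cancel₀ hu, one_mul, mul_assoc ((fs q)⁻¹), mul_inv_cancel₀ hu, mul_one,
      inv_mul_cancel₀ hfs_ne]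
  refine ⟨h1, h2, ?_⟩
  -- part 3
  have hne : Nonempty {q : Quaternion ℝ // ‖q‖ < 1} := ⟨⟨0, by norm_num⟩⟩
  have hbdd : BddAbove (Set.range fun q : {q : Quaternion ℝ // ‖q‖ < 1} => ‖f q.1‖) := by
    refine ⟨1, ?_⟩
    rintro r ⟨q, rfl⟩
    exact (hbd q.1 q.2).2
  refine ciSup_le fun q => ?_
  obtain ⟨q', hq', he⟩ := hkeyJ q.1 q.2
  have hfs_lb := h1 q.1 q.2
  calc ‖g q.1‖ = ‖(fs q.1)⁻¹ * fc q.1‖ := by rw [hg]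
    _ = ‖fs q.1‖⁻¹ * ‖fc q.1‖ := by rw [norm_mul, norm_inv]
    _ ≤ (1 / δ ^ 2) * ⨆ q : {q : Quaternion ℝ // ‖q‖ < 1}, ‖f q.1‖ := by
        apply mul_le_mul
        · rw [one_div]
          exact inv_anti₀ (by positivity) hfs_lb
        · rw [he]
          exact le_ciSup hbdd ⟨q', hq'⟩
        · exact norm_nonneg _
        · positivity
end
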